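/- For every fighting fish F, the nonempty prefixes of F with latitude 0 are exactly the prefixes E, E², …, E^{jaw(F)} and F itself; in particular ℓ(F) = jaw(F) + 1. -/

import Mathlib

/-- The four-letter alphabet of steps. -/
inductive Letter : Type
  | E | N | W | S
deriving DecidableEq, Repr

open Letter

/-- Fighting fish: words obtainable from `ENWS` by upper, lower and double gluings. -/
inductive IsFF : List Letter → Prop
  | base : IsFF [E, N, W, S]
  | upper (u v : List Letter) :
      IsFF (u ++ [W] ++ v) → IsFF (u ++ [N, W, S] ++ v)
  | lower (u v : List Letter) :
      IsFF (u ++ [N] ++ v) → IsFF (u ++ [E, N, W] ++ v)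
  | double (u v : List Letter) :
      IsFF (u ++ [W, N] ++ v) → IsFF (u ++ [N, W] ++ v)

/-- Generalized fighting fish: words obtainable from the empty word by the
operations `∇_k` (replace `N^k` by `E N^k W`) and `△_k` (replace `W^k` by `N W^k S`),
for `k ≥ 0`. -/
inductive IsGFF : List Letter → Prop
  | base : IsGFF []
  | nabla (u v : List Letter) (k : ℕ) :
      IsGFF (u ++ List.replicate k N ++ v) →
      IsGFF (u ++ [E] ++ List.replicate k N ++ [W] ++ v)
  | delta (u v : List Letter) (k : ℕ) :
      IsGFF (u ++ List.replicate k W ++ v) →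
      IsGFF (u ++ [N] ++ List.replicate k W ++ [S] ++ v)

/-- The latitude of a word: number of `N`'s minus number of `S`'s. -/
def lat (w : List Letter) : ℤ := (w.count N : ℤ) - (w.count S : ℤ)

/-- The longitude of a word: number of `E`'s minus number of `W`'s. -/
def long (w : List Letter) : ℤ := (w.count E : ℤ) - (w.count W : ℤ)

/-- The size of a word: half its length. -/
def size (w : List Letter) : ℕ := w.length / 2

/-- The lengths of the nonempty prefixes of `w` with latitude 0, in increasing order. -/
def zeroPrefixLengths (w : List Letter) : List ℕ :=
  ((List.range w.length).map (· + 1)).filter (fun m => decide (lat (w.take m) = 0))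

/-- `ℓ(w)`: the number of nonempty prefixes of `w` (including `w` itself) with latitude 0. -/
def ell (w : List Letter) : ℕ := (zeroPrefixLengths w).length

/-- The length of the `i`-th shortest prefix of `w` with latitude 0
(the 0-th such prefix being the empty one). -/
def zeroPrefixLen (w : List Letter) (i : ℕ) : ℕ := (0 :: zeroPrefixLengths w).getD i 0

/-- The `i`-augmentation `✠_i(w)`: writing `w = G_i · H` where `G_i` is the `i`-th
shortest latitude-0 prefix of `w`, it is `G_i · N · H · S`. -/
def aug (w : List Letter) (i : ℕ) : List Letter :=
  w.take (zeroPrefixLen w i) ++ [Letter.N] ++ w.drop (zeroPrefixLen w i) ++ [Letter.S]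

/-- Concatenation of generalized fighting fish: `F1 ⊕ F2 = F1 · E · F2 · W`. -/
def oplus (w1 w2 : List Letter) : List Letter := w1 ++ [Letter.E] ++ w2 ++ [Letter.W]

/-- The jaw of a word: the length of the maximal initial run of `E`'s. -/
def jaw (w : List Letter) : ℕ := (w.takeWhile (· == Letter.E)).length

/-- The `i`-augmentation of a fighting fish `F = E^{jaw F} · G`:
`✠_i(F) = E^i · N · E^{jaw F − i} · G · S`. -/
def ffAug (w : List Letter) (i : ℕ) : List Letter :=
  List.replicate i Letter.E ++ [Letter.N] ++ List.replicate (jaw w - i) Letter.E ++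
    w.drop (jaw w) ++ [Letter.S]

/-- The concatenation of fighting fish `F1 = E^{jaw F1} · N · R` and `F2 = G · S`:
`F1 ⊙ F2 = E^{jaw F1} · G · R`. -/
def ffConc (w1 w2 : List Letter) : List Letter :=
  List.replicate (jaw w1) Letter.E ++ w2.dropLast ++ w1.drop (jaw w1 + 1)

/-!
Every proper prefix of a fighting fish is either a run of `E`'s or has positive latitude, and
the fish itself has latitude 0. This holds for `ENWS` and survives every gluing: a gluing
replaces a factor containing a non-`E` letter by a factor of the same latitude whose proper
prefixes are again runs of `E`'s or of positive latitude, and that property is closed under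
concatenation. So the nonempty latitude-0 prefixes are the runs `E^k` inside the jaw and the
fish itself, and these are `jaw F + 1` prefixes because a fighting fish contains an `N`.
-/

@[simp] lemma lat_append (a b : List Letter) : lat (a ++ b) = lat a + lat b := by
  simp only [lat, List.count_append]; push_cast; ring

lemma lat_eq_zero_of_forall_eq_E {p : List Letter} (hp : ∀ a ∈ p, a = E) : lat p = 0 := by
  rw [List.eq_replicate_of_mem hp]
  simp [lat, List.count_replicate]

def EastOrAbove (p : List Letter) : Prop := (∀ a ∈ p, a = E) ∨ 0 < lat p

lemma EastOrAbove.lat_nonneg {p : List Letter} (hp : EastOrAbove p) : 0 ≤ lat p :=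
  hp.elim (fun h => (lat_eq_zero_of_forall_eq_E h).ge) le_of_lt

lemma EastOrAbove.append {p q : List Letter} (hp : EastOrAbove p) (hq : EastOrAbove q) :
    EastOrAbove (p ++ q) := by
  rcases hq with hq | hq
  · rcases hp with hp | hp
    · exact .inl fun a ha => (List.mem_append.mp ha).elim (hp a) (hq a)
    · right; simp [lat_eq_zero_of_forall_eq_E hq, hp]
  · right; simp only [lat_append]; linarith [hp.lat_nonneg]

structure FFInvariant (F : List Letter) : Prop where
  mem_N : N ∈ F
  lat_eq_zero : lat F = 0
  eastOrAbove : ∀ p, p <+: F → p ≠ F → EastOrAbove p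

lemma prefix_append_cases {α : Type*} {p a b : List α} (h : p <+: a ++ b) :
    p <+: a ∨ ∃ r, r <+: b ∧ p = a ++ r := by
  obtain ⟨t, ht⟩ := h
  rcases List.append_eq_append_iff.mp ht with ⟨c, rfl, -⟩ | ⟨r, rfl, hb⟩
  · exact .inl (List.prefix_append _ _)
  · exact .inr ⟨r, ⟨t, hb.symm⟩, rfl⟩

lemma FFInvariant.replace {u x y v : List Letter} (h : FFInvariant (u ++ x ++ v))
    (hx : ∃ a ∈ x, a ≠ E) (hN : N ∈ y) (hlat : lat y = lat x)
    (hy : ∀ q ∈ y.inits, q ≠ y → EastOrAbove q) : FFInvariant (u ++ y ++ v) := by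
  have hx_ne : x ≠ [] := by rintro rfl; simp at hx
  have hu : EastOrAbove u := h.eastOrAbove u (by simp [List.append_assoc]) (by simp [hx_ne])
  refine ⟨by simp [hN], by simpa [hlat] using h.lat_eq_zero, fun p hp hne => ?_⟩
  rw [List.append_assoc] at hp
  rcases prefix_append_cases hp with hpu | ⟨q, hq, rfl⟩
  · refine h.eastOrAbove p (hpu.trans (by simp [List.append_assoc])) fun he => hx_ne ?_
    have := hpu.length_le
    simp only [he, List.length_append] at this
    exact List.eq_nil_of_length_eq_zero (by omega)
  have beyond_y : ∀ r, r <+: v → r ≠ v → EastOrAbove (u ++ (y ++ r)) := by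
    intro r hr hrv
    have hold := h.eastOrAbove (u ++ (x ++ r)) (by simpa [List.append_assoc] using hr)
      (by simpa [List.append_assoc] using hrv)
    obtain ⟨a, hax, haE⟩ := hx
    exact .inr (by simpa [hlat] using hold.resolve_left fun hE => haE (hE a (by simp [hax])))
  rcases prefix_append_cases hq with hqy | ⟨r, hr, rfl⟩
  · rcases eq_or_ne q y with rfl | hqy'
    · simpa using beyond_y [] List.nil_prefix (by simpa using hne)
    · exact hu.append (hy q ((List.mem_inits _ _).mpr hqy) hqy')
  · exact beyond_y r hr (by simpa using hne)

lemma IsFF.ffInvariant {F : List Letter} (hF : IsFF F) : FFInvariant F := by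
  induction hF with
  | base =>
    refine ⟨by decide, by decide, fun p hp => ?_⟩
    rw [← List.mem_inits] at hp
    revert p
    simp [List.inits, EastOrAbove, lat]
  | upper _ _ _ ih | lower _ _ _ ih | double _ _ _ ih =>
    exact ih.replace (by decide) (by decide) (by decide) (by simp [List.inits, EastOrAbove, lat])

lemma replicate_E_prefix_iff_le_jaw {F : List Letter} {k : ℕ} :
    List.replicate k E <+: F ↔ k ≤ jaw F := by
  induction F generalizing k with
  | nil => simp [jaw]
  | cons a t ih =>
    cases k with
    | zero => simp
    | succ k =>
      rw [List.replicate_succ, List.cons_prefix_cons, ih]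
      cases a <;> simp [jaw]

lemma jaw_lt_length {F : List Letter} (hF : ∃ a ∈ F, a ≠ E) : jaw F < F.length := by
  obtain ⟨a, ha, haE⟩ := hF
  refine lt_of_le_of_ne (List.IsPrefix.length_le (List.takeWhile_prefix _)) fun h => haE ?_
  have := List.takeWhile_eq_self_iff.mp (List.IsPrefix.eq_of_length (List.takeWhile_prefix _) h)
  simpa using this a ha

lemma length_filter_map_succ_range {P : ℕ → Bool} {j n : ℕ} (hjn : j < n)
    (hP : ∀ m, 1 ≤ m → m ≤ n → (P m ↔ m ≤ j ∨ m = n)) :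
    (((List.range n).map (· + 1)).filter P).length = j + 1 := by
  have hnodup : (((List.range n).map (· + 1)).filter P).Nodup :=
    ((List.nodup_range).map fun _ _ => Nat.succ.inj).filter _
  have hset : (((List.range n).map (· + 1)).filter P).toFinset = insert n (Finset.Icc 1 j) := by
    ext m
    simp only [List.mem_toFinset, List.mem_filter, List.mem_map, List.mem_range,
      Finset.mem_insert, Finset.mem_Icc]
    constructor
    · rintro ⟨⟨a, ha, rfl⟩, hPa⟩
      have := (hP (a + 1) (by omega) (by omega)).mp hPa
      omega
    · intro hm
      refine ⟨⟨m - 1, by omega, by omega⟩, (hP m (by omega) (by omega)).mpr (by omega)⟩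
  rw [← List.toFinset_card_of_nodup hnodup, hset, Finset.card_insert_of_notMem (by simp only [Finset.mem_Icc]; omega),
    Nat.card_Icc]
  omega

lemma FFInvariant.lat_eq_zero_iff_of_prefix {F p : List Letter} (h : FFInvariant F)
    (hp : p <+: F) (hne : p ≠ []) :
    lat p = 0 ↔ (∃ k, 1 ≤ k ∧ k ≤ jaw F ∧ p = List.replicate k E) ∨ p = F := by
  constructor
  · intro hlat
    refine or_iff_not_imp_right.mpr fun hpF => ?_
    have hE : ∀ a ∈ p, a = E := (h.eastOrAbove p hp hpF).resolve_right hlat.not_gt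
    rw [List.eq_replicate_of_mem hE] at hp ⊢
    exact ⟨p.length, List.length_pos_iff.mpr hne, replicate_E_prefix_iff_le_jaw.mp hp, rfl⟩
  · rintro (⟨k, -, -, rfl⟩ | rfl)
    · exact lat_eq_zero_of_forall_eq_E fun a ha => List.eq_of_mem_replicate ha
    · exact h.lat_eq_zero

lemma FFInvariant.ell_eq_jaw_add_one {F : List Letter} (h : FFInvariant F) :
    ell F = jaw F + 1 := by
  refine length_filter_map_succ_range (jaw_lt_length ⟨N, h.mem_N, by decide⟩) fun m hm1 hmn => ?_
  have hne : F.take m ≠ [] := List.ne_nil_of_length_pos (by simp only [List.length_take]; omega)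
  rw [decide_eq_true_iff, h.lat_eq_zero_iff_of_prefix (List.take_prefix m F) hne,
    List.take_eq_self_iff]
  refine or_congr ⟨fun ⟨k, _, hk, he⟩ => ?_, fun hm => ⟨m, hm1, hm, ?_⟩⟩ (by omega)
  · have := congrArg List.length he
    simp only [List.length_take, List.length_replicate] at this
    omega
  · simpa using (List.prefix_iff_eq_take.mp (replicate_E_prefix_iff_le_jaw.mpr hm)).symm

/-- For a fighting fish `F`, the nonempty prefixes of `F` with latitude 0 are
exactly `E, E², …, E^{jaw F}` and `F` itself; in particular `ℓ(F) = jaw F + 1`. -/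
theorem ff_zero_latitude_prefixes (F : List Letter) (hF : IsFF F) :
    (∀ p : List Letter, p <+: F → p ≠ [] →
      (lat p = 0 ↔
        ((∃ k : ℕ, 1 ≤ k ∧ k ≤ jaw F ∧ p = List.replicate k E) ∨ p = F))) ∧
    ell F = jaw F + 1 :=
  ⟨fun _ hp hne => hF.ffInvariant.lat_eq_zero_iff_of_prefix hp hne,
    hF.ffInvariant.ell_eq_jaw_add_one⟩
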